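/- arXiv:2306.02461 — 5 statements merged into one kernel-verified Lean document; each statement's English description precedes it below -/
import Mathlib

section
/- Let Y be a real inner product space, let θ ∈ [0,1], and let k_n, k_{n-1} > 0 be two consecutive step sizes with ε_n = (k_n − k_{n-1})/(k_n + k_{n-1}). Then for any three elements y_{n-1}, y_n, y_{n+1} ∈ Y the G-stability identity holds: ⟨α_2 y_{n+1} + α_1 y_n + α_0 y_{n-1}, β_2^{(n)} y_{n+1} + β_1^{(n)} y_n + β_0^{(n)} y_{n-1}⟩_Y = ‖(y_{n+1}, y_n)‖_{G(θ)}^2 − ‖(y_n, y_{n-1})‖_{G(θ)}^2 + ‖γ_2^{(n)} y_{n+1} + γ_1^{(n)} y_n + γ_0^{(n)} y_{n-1}‖_Y^2. -/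
open RealInnerProductSpace

/-!
Both sides are quadratic forms in `(y₀, y₁, y₂)`, so the identity amounts to an equality of the
six coefficients of the Gram entries `⟪yᵢ, yⱼ⟫`. The dissipation vector is `γ₁` times a vector
with rational coefficients, and only `γ₁² = θ(1 - θ²) / (2(1 + εθ)²)` enters, so after clearing
the denominator `(1 + εθ)²` the coefficient equalities are polynomial identities in `θ` and `ε`.
The step-size ratio only has to keep `1 + εθ` away from zero, which `|ε| < 1` guarantees.
-/

lemma abs_sub_div_add_lt_one {a b : ℝ} (ha : 0 < a) (hb : 0 < b) : |(a - b) / (a + b)| < 1 := by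
  rw [abs_div, abs_of_pos (add_pos ha hb), div_lt_one (add_pos ha hb), abs_sub_lt_iff]
  constructor <;> linarith

lemma one_add_mul_pos_of_abs_lt_one {ε θ : ℝ} (hε : |ε| < 1) (hθ : |θ| ≤ 1) : 0 < 1 + ε * θ := by
  have h : |ε * θ| < 1 := by
    rw [abs_mul]
    nlinarith [abs_nonneg ε, abs_nonneg θ]
  linarith [neg_abs_le (ε * θ)]

lemma neg_sqrt_div_sqrt_two_mul_sq {a : ℝ} (ha : 0 ≤ a) (c : ℝ) :
    (-(Real.sqrt a / (Real.sqrt 2 * c))) ^ 2 = a / (2 * c ^ 2) := by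
  rw [neg_sq, div_pow, mul_pow, Real.sq_sqrt ha, Real.sq_sqrt zero_le_two]

theorem dln_inner_eq_G_norm_sq_sub_add_norm_sq
    {Y : Type*} [NormedAddCommGroup Y] [InnerProductSpace ℝ Y]
    {θ ε g : ℝ} (hc : 1 + ε * θ ≠ 0) (hg : g ^ 2 = θ * (1 - θ ^ 2) / (2 * (1 + ε * θ) ^ 2))
    (y0 y1 y2 : Y) :
    ⟪((θ + 1) / 2) • y2 + (-θ) • y1 + ((θ - 1) / 2) • y0,
      ((1/4) * (1 + (1 - θ^2)/(1 + ε*θ)^2 + ε^2*θ*(1 - θ^2)/(1 + ε*θ)^2 + θ)) • y2 +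
      ((1/2) * (1 - (1 - θ^2)/(1 + ε*θ)^2)) • y1 +
      ((1/4) * (1 + (1 - θ^2)/(1 + ε*θ)^2 - ε^2*θ*(1 - θ^2)/(1 + ε*θ)^2 - θ)) • y0⟫
    = ((1/4)*(1 + θ)*‖y2‖^2 + (1/4)*(1 - θ)*‖y1‖^2)
      - ((1/4)*(1 + θ)*‖y1‖^2 + (1/4)*(1 - θ)*‖y0‖^2)
      + ‖(-((1 - ε)/2) * g) • y2 + g • y1 + (-((1 + ε)/2) * g) • y0‖^2 := by
  have hdiss : (-((1 - ε)/2) * g) • y2 + g • y1 + (-((1 + ε)/2) * g) • y0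
      = g • ((-((1 - ε)/2)) • y2 + y1 + (-((1 + ε)/2)) • y0) := by
    module
  rw [hdiss, norm_smul, Real.norm_eq_abs, mul_pow, sq_abs, hg]
  simp only [← real_inner_self_eq_norm_sq, inner_add_left, inner_add_right,
    real_inner_smul_left, real_inner_smul_right]
  rw [real_inner_comm y1 y2, real_inner_comm y0 y2, real_inner_comm y0 y1]
  -- the form in which `field_simp` meets the denominator after normalisation
  have hc' : 1 + θ * ε ≠ 0 := by rwa [mul_comm]
  field_simp
  ring

/-- G-stability identity for the variable-step DLN method. -/
theorem dln_g_stability_identity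
    (Y : Type*) [NormedAddCommGroup Y] [InnerProductSpace ℝ Y]
    (θ : ℝ) (hθ : θ ∈ Set.Icc (0:ℝ) 1)
    (kn kn1 : ℝ) (hkn : 0 < kn) (hkn1 : 0 < kn1)
    (y0 y1 y2 : Y) :
    let ε : ℝ := (kn - kn1) / (kn + kn1)
    let α2 : ℝ := (θ + 1) / 2
    let α1 : ℝ := -θ
    let α0 : ℝ := (θ - 1) / 2
    let β2 : ℝ := (1/4) * (1 + (1 - θ^2)/(1 + ε*θ)^2 + ε^2*θ*(1 - θ^2)/(1 + ε*θ)^2 + θ)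
    let β1 : ℝ := (1/2) * (1 - (1 - θ^2)/(1 + ε*θ)^2)
    let β0 : ℝ := (1/4) * (1 + (1 - θ^2)/(1 + ε*θ)^2 - ε^2*θ*(1 - θ^2)/(1 + ε*θ)^2 - θ)
    let γ1 : ℝ := -(Real.sqrt (θ*(1 - θ^2)) / (Real.sqrt 2 * (1 + ε*θ)))
    let γ2 : ℝ := -((1 - ε)/2) * γ1
    let γ0 : ℝ := -((1 + ε)/2) * γ1
    let Gnorm2 : Y → Y → ℝ := fun u v => (1/4)*(1 + θ)*‖u‖^2 + (1/4)*(1 - θ)*‖v‖^2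
    ⟪α2 • y2 + α1 • y1 + α0 • y0, β2 • y2 + β1 • y1 + β0 • y0⟫
      = Gnorm2 y2 y1 - Gnorm2 y1 y0 + ‖γ2 • y2 + γ1 • y1 + γ0 • y0‖^2 := by
  intro ε α2 α1 α0 β2 β1 β0 γ1 γ2 γ0 Gnorm2
  obtain ⟨hθ0, hθ1⟩ := hθ
  have hc : 0 < 1 + ε * θ :=
    one_add_mul_pos_of_abs_lt_one (abs_sub_div_add_lt_one hkn hkn1) (abs_le.mpr ⟨by linarith, hθ1⟩)
  have hγ1 : γ1 ^ 2 = θ * (1 - θ ^ 2) / (2 * (1 + ε * θ) ^ 2) :=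
    neg_sqrt_div_sqrt_two_mul_sq (mul_nonneg hθ0 (by nlinarith)) _
  exact dln_inner_eq_G_norm_sq_sub_add_norm_sq hc.ne' hγ1 y0 y1 y2
end

section
/- Refactorization equivalence of the DLN step: let Y be a real vector space, f : ℝ × Y → Y, θ ∈ [0,1], ε_n ∈ (−1,1), and suppose α_2 ≠ 0 and β_2^{(n)} ≠ 0. Given y_n, y_{n-1} ∈ Y and time nodes with t_{n,β} = β_2^{(n)} t_{n+1} + β_1^{(n)} t_n + β_0^{(n)} t_{n-1}, set y_n^{old} = a_1^{(n)} y_n + a_0^{(n)} y_{n-1} with a_1^{(n)} = β_1^{(n)} − α_1 β_2^{(n)}/α_2, a_0^{(n)} = β_0^{(n)} − α_0 β_2^{(n)}/α_2, and k̂_n^{BE} = (β_2^{(n)}/α_2) k̂_n. Then y_{n+1} ∈ Y satisfies the DLN relation α_2 y_{n+1} + α_1 y_n + α_0 y_{n-1} = k̂_n f(t_{n,β}, β_2^{(n)} y_{n+1} + β_1^{(n)} y_n + β_0^{(n)} y_{n-1}) if and only if y^{temp} := β_2^{(n)} y_{n+1} + β_1^{(n)} y_n + β_0^{(n)} y_{n-1}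 satisfies the backward-Euler relation y^{temp} − y_n^{old} = k̂_n^{BE} f(t_{n,β}, y^{temp}); moreover in this case y_{n+1} = c_2^{(n)} y^{temp} + c_1^{(n)} y_n + c_0^{(n)} y_{n-1} with c_2^{(n)} = 1/β_2^{(n)}, c_1^{(n)} = −β_1^{(n)}/β_2^{(n)}, c_0^{(n)} = −β_0^{(n)}/β_2^{(n)}. -/
/-!
The DLN left-hand side is a scalar multiple of `y_temp - y_old`: since `α₂ ≠ 0`, eliminating
`y_{n+1}` gives `y_temp - y_old = (β₂ / α₂) (α₂ y_{n+1} + α₁ y_n + α₀ y_{n-1})`. Scaling the DLN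
relation by the nonzero factor `β₂ / α₂` therefore turns it into the backward-Euler relation with
step `(β₂ / α₂) k̂_n`, and `y_{n+1}` is recovered from `y_temp` because `β₂ ≠ 0`.
-/

namespace DLN

variable {K V : Type*} [Field K] [AddCommGroup V] [Module K V]

theorem temp_sub_old_eq_smul {a₂ : K} (a₁ a₀ b₂ b₁ b₀ : K) (ha₂ : a₂ ≠ 0) (y₂ y₁ y₀ : V) :
    (b₂ • y₂ + b₁ • y₁ + b₀ • y₀) - ((b₁ - a₁ * b₂ / a₂) • y₁ + (b₀ - a₀ * b₂ / a₂) • y₀) =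
      (b₂ / a₂) • (a₂ • y₂ + a₁ • y₁ + a₀ • y₀) := by
  simp only [smul_add, smul_smul]
  match_scalars <;> field_simp <;> ring

theorem step_iff_backwardEuler {a₂ b₂ : K} (a₁ a₀ b₁ b₀ k : K) (ha₂ : a₂ ≠ 0) (hb₂ : b₂ ≠ 0)
    (y₂ y₁ y₀ F : V) :
    a₂ • y₂ + a₁ • y₁ + a₀ • y₀ = k • F ↔
      (b₂ • y₂ + b₁ • y₁ + b₀ • y₀) - ((b₁ - a₁ * b₂ / a₂) • y₁ + (b₀ - a₀ * b₂ / a₂) • y₀) =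
        (b₂ / a₂ * k) • F := by
  rw [temp_sub_old_eq_smul a₁ a₀ b₂ b₁ b₀ ha₂, mul_smul,
    smul_right_inj (div_ne_zero hb₂ ha₂)]

theorem eq_postprocess {b₂ : K} (b₁ b₀ : K) (hb₂ : b₂ ≠ 0) (y₂ y₁ y₀ : V) :
    y₂ = (1 / b₂) • (b₂ • y₂ + b₁ • y₁ + b₀ • y₀) + (-b₁ / b₂) • y₁ + (-b₀ / b₂) • y₀ := by
  simp only [smul_add, smul_smul]
  match_scalars <;> field_simp <;> ring

end DLN

theorem dln_refactorization_equivalence_general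
    (Y : Type*) [AddCommGroup Y] [Module ℝ Y]
    (f : ℝ × Y → Y)
    (θ : ℝ)
    (kn kn1 : ℝ)
    (ε : ℝ)
    (t0 t1 t2 : ℝ) (y0 y1 y2 : Y) :
    let α2 : ℝ := (θ + 1) / 2
    let α1 : ℝ := -θ
    let α0 : ℝ := (θ - 1) / 2
    let β2 : ℝ := (1/4) * (1 + (1 - θ^2)/(1 + ε*θ)^2 + ε^2*θ*(1 - θ^2)/(1 + ε*θ)^2 + θ)
    let β1 : ℝ := (1/2) * (1 - (1 - θ^2)/(1 + ε*θ)^2)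
    let β0 : ℝ := (1/4) * (1 + (1 - θ^2)/(1 + ε*θ)^2 - ε^2*θ*(1 - θ^2)/(1 + ε*θ)^2 - θ)
    let khat : ℝ := α2 * kn - α0 * kn1
    let tβ : ℝ := β2 * t2 + β1 * t1 + β0 * t0
    let a1 : ℝ := β1 - α1 * β2 / α2
    let a0 : ℝ := β0 - α0 * β2 / α2
    let khatBE : ℝ := (β2 / α2) * khat
    let ynold : Y := a1 • y1 + a0 • y0
    let ytemp : Y := β2 • y2 + β1 • y1 + β0 • y0
    let c2 : ℝ := 1 / β2
    let c1 : ℝ := -β1 / β2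
    let c0 : ℝ := -β0 / β2
    α2 ≠ 0 → β2 ≠ 0 →
      ((α2 • y2 + α1 • y1 + α0 • y0 = khat • f (tβ, ytemp)
          ↔ ytemp - ynold = khatBE • f (tβ, ytemp)) ∧
       (α2 • y2 + α1 • y1 + α0 • y0 = khat • f (tβ, ytemp)
          → y2 = c2 • ytemp + c1 • y1 + c0 • y0)) := by
  intro α2 α1 α0 β2 β1 β0 khat tβ a1 a0 khatBE ynold ytemp c2 c1 c0 hα2 hβ2
  exact ⟨DLN.step_iff_backwardEuler α1 α0 β1 β0 khat hα2 hβ2 y2 y1 y0 (f (tβ, ytemp)),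
    fun _ => DLN.eq_postprocess β1 β0 hβ2 y2 y1 y0⟩

/-- Refactorization equivalence of one DLN step: the DLN relation holds iff the
intermediate value `y_temp = β₂ y_{n+1} + β₁ y_n + β₀ y_{n-1}` solves a
backward-Euler step from `y_n^old` with step `k̂_n^BE`, and then `y_{n+1}` is
recovered by the post-process `y_{n+1} = c₂ y_temp + c₁ y_n + c₀ y_{n-1}`. -/
theorem dln_refactorization_equivalence
    (Y : Type*) [AddCommGroup Y] [Module ℝ Y]
    (f : ℝ × Y → Y)
    (θ : ℝ) (hθ : θ ∈ Set.Icc (0:ℝ) 1)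
    (kn kn1 : ℝ) (hkn : 0 < kn) (hkn1 : 0 < kn1)
    (ε : ℝ) (hε : ε ∈ Set.Ioo (-1:ℝ) 1) (hεdef : ε = (kn - kn1) / (kn + kn1))
    (t0 t1 t2 : ℝ) (y0 y1 y2 : Y) :
    let α2 : ℝ := (θ + 1) / 2
    let α1 : ℝ := -θ
    let α0 : ℝ := (θ - 1) / 2
    let β2 : ℝ := (1/4) * (1 + (1 - θ^2)/(1 + ε*θ)^2 + ε^2*θ*(1 - θ^2)/(1 + ε*θ)^2 + θ)
    let β1 : ℝ := (1/2) * (1 - (1 - θ^2)/(1 + ε*θ)^2)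
    let β0 : ℝ := (1/4) * (1 + (1 - θ^2)/(1 + ε*θ)^2 - ε^2*θ*(1 - θ^2)/(1 + ε*θ)^2 - θ)
    let khat : ℝ := α2 * kn - α0 * kn1
    let tβ : ℝ := β2 * t2 + β1 * t1 + β0 * t0
    let a1 : ℝ := β1 - α1 * β2 / α2
    let a0 : ℝ := β0 - α0 * β2 / α2
    let khatBE : ℝ := (β2 / α2) * khat
    let ynold : Y := a1 • y1 + a0 • y0
    let ytemp : Y := β2 • y2 + β1 • y1 + β0 • y0
    let c2 : ℝ := 1 / β2
    let c1 : ℝ := -β1 / β2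
    let c0 : ℝ := -β0 / β2
    α2 ≠ 0 → β2 ≠ 0 →
      ((α2 • y2 + α1 • y1 + α0 • y0 = khat • f (tβ, ytemp)
          ↔ ytemp - ynold = khatBE • f (tβ, ytemp)) ∧
       (α2 • y2 + α1 • y1 + α0 • y0 = khat • f (tβ, ytemp)
          → y2 = c2 • ytemp + c1 • y1 + c0 • y0)) :=
  dln_refactorization_equivalence_general Y f θ kn kn1 ε t0 t1 t2 y0 y1 y2
end

section
/- Consistency of the β-average: for every θ ∈ [0,1] there is a constant C(θ) > 0 such that for every real Banach space Y, every twice continuously differentiable map u : ℝ → Y, and all time nodes t_{n-1} < t_n < t_{n+1} with k_n = t_{n+1} − t_n, k_{n-1} = t_n − t_{n-1}, one has ‖u_{n,β} − u(t_{n,β})‖_Y² ≤ C(θ) (k_n + k_{n-1})³ ∫_{t_{n-1}}^{t_{n+1}} ‖u''(t)‖_Y² dt, where u_{n,β} = β_2^{(n)} u(t_{n+1}) + β_1^{(n)} u(t_n) + β_0^{(n)} u(t_{n-1}) and t_{n,β} = β_2^{(n)} t_{n+1} + β_1^{(n)} t_n + β_0^{(n)} t_{n-1}. -/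
/-!
Subtracting from `u` its tangent direction at `t_{n-1}` changes neither side, because the weights
sum to one and `t_{n,β}` is the same affine combination of the nodes. The modified function has
derivative bounded by `∫ ‖u''‖` on `[t_{n-1}, t_{n+1}]`, and `t_{n,β}` lies in that interval,
so the error is at most `(|β₂| + |β₁| + |β₀|) (k_n + k_{n-1}) ∫ ‖u''‖`. The weights are bounded
uniformly in `ε ∈ (-1, 1)` since `(1 - θ²)/(1 + εθ)² ≤ (1 + θ)/(1 - θ)`, and Cauchy–Schwarz turns
`(∫ ‖u''‖)²` into `(k_n + k_{n-1}) ∫ ‖u''‖²`.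
-/

open MeasureTheory Set

theorem sq_intervalIntegral_le_mul_intervalIntegral_sq {f : ℝ → ℝ} {a b : ℝ} (hab : a ≤ b)
    (hf : IntervalIntegrable f volume a b)
    (hf2 : IntervalIntegrable (fun t ↦ f t ^ 2) volume a b) :
    (∫ t in a..b, f t) ^ 2 ≤ (b - a) * ∫ t in a..b, f t ^ 2 := by
  rcases hab.eq_or_lt with rfl | hab
  · simp
  have jensen := (even_two.convexOn_pow (𝕜 := ℝ)).map_set_average_le
    (continuous_pow 2).continuousOn isClosed_univ (μ := volume) (t := uIoc a b)
    (by simp [uIoc_of_le hab.le, hab]) (by simp) (by simp) hf.def' hf2.def'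
  rw [interval_average_eq_div, interval_average_eq_div, div_pow,
    div_le_div_iff₀ (by positivity) (by linarith)] at jensen
  nlinarith [sub_pos.2 hab]

section SecondDerivative

variable {E : Type*} [NormedAddCommGroup E] [NormedSpace ℝ E] {u : ℝ → E}

theorem norm_deriv_sub_deriv_le_integral_norm_iteratedDeriv_two (hu : ContDiff ℝ 2 u)
    {a b x : ℝ} (hx : x ∈ Icc a b) :
    ‖deriv u x - deriv u a‖ ≤ ∫ t in a..b, ‖iteratedDeriv 2 u t‖ := by
  have hu₂ : Continuous fun t ↦ ‖iteratedDeriv 2 u t‖ :=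
    (hu.continuous_iteratedDeriv 2 le_rfl).norm
  have hderiv : ∀ t, HasDerivAt (deriv u) (iteratedDeriv 2 u t) t := fun t ↦ by
    simpa [iteratedDeriv_succ] using (hu.differentiable_deriv_two t).hasDerivAt
  calc ‖deriv u x - deriv u a‖ ≤ ∫ t in a..x, ‖iteratedDeriv 2 u t‖ :=
        image_norm_le_of_norm_deriv_right_le_deriv_boundary (f := fun t ↦ deriv u t - deriv u a)
          ((hu.continuous_deriv one_le_two).sub continuous_const).continuousOn
          (fun t _ ↦ ((hderiv t).sub_const _).hasDerivWithinAt) (by simp)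
          (fun t ↦ (hu₂.integral_hasStrictDerivAt a t).hasDerivAt) (fun _ _ ↦ le_rfl)
          ⟨hx.1, hx.2⟩
    _ ≤ ∫ t in a..b, ‖iteratedDeriv 2 u t‖ :=
        intervalIntegral.integral_mono_interval le_rfl hx.1 hx.2
          (Filter.Eventually.of_forall fun _ ↦ norm_nonneg _) (hu₂.intervalIntegrable a b)

theorem norm_sub_smul_deriv_sub_le (hu : ContDiff ℝ 2 u) {a b x y : ℝ}
    (hx : x ∈ Icc a b) (hy : y ∈ Icc a b) :
    ‖(u x - x • deriv u a) - (u y - y • deriv u a)‖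
      ≤ (∫ t in a..b, ‖iteratedDeriv 2 u t‖) * |x - y| := by
  have hderiv : ∀ t, HasDerivAt (fun t ↦ u t - t • deriv u a) (deriv u t - deriv u a) t :=
    fun t ↦ by
      simpa using ((hu.differentiable two_ne_zero t).hasDerivAt).fun_sub
        ((hasDerivAt_id t).smul_const (deriv u a))
  exact (convex_Icc a b).norm_image_sub_le_of_norm_hasDerivWithin_le
    (fun t _ ↦ (hderiv t).hasDerivWithinAt)
    (fun t ht ↦ norm_deriv_sub_deriv_le_integral_norm_iteratedDeriv_two hu ht) hy hx

theorem norm_affineCombination_sub_le (hu : ContDiff ℝ 2 u) {a b w₀ w₁ w₂ x₀ x₁ x₂ s : ℝ}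
    (hx₀ : x₀ ∈ Icc a b) (hx₁ : x₁ ∈ Icc a b) (hx₂ : x₂ ∈ Icc a b) (hs : s ∈ Icc a b)
    (hw : w₂ + w₁ + w₀ = 1) (hws : s = w₂ * x₂ + w₁ * x₁ + w₀ * x₀) :
    ‖w₂ • u x₂ + w₁ • u x₁ + w₀ • u x₀ - u s‖
      ≤ (|w₂| + |w₁| + |w₀|) * ((b - a) * ∫ t in a..b, ‖iteratedDeriv 2 u t‖) := by
  set g : ℝ → E := fun x ↦ u x - x • deriv u a
  have hdecomp : w₂ • u x₂ + w₁ • u x₁ + w₀ • u x₀ - u s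
      = w₂ • (g x₂ - g s) + w₁ • (g x₁ - g s) + w₀ • (g x₀ - g s) := by
    obtain rfl : w₀ = 1 - w₂ - w₁ := by linarith
    subst hws
    simp only [g]
    module
  have hg : ∀ x ∈ Icc a b, ‖g x - g s‖ ≤ (b - a) * ∫ t in a..b, ‖iteratedDeriv 2 u t‖ := by
    intro x hx
    refine (norm_sub_smul_deriv_sub_le hu hx hs).trans ?_
    rw [mul_comm]
    gcongr
    · exact intervalIntegral.integral_nonneg (hx.1.trans hx.2) fun _ _ ↦ norm_nonneg _
    · exact abs_sub_le_of_le_of_le hx.1 hx.2 hs.1 hs.2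
  rw [hdecomp]
  refine (norm_add₃_le ..).trans ?_
  simp only [norm_smul, Real.norm_eq_abs, add_mul]
  gcongr <;> apply hg <;> assumption

end SecondDerivative

noncomputable section

def dlnBeta2 (θ ε : ℝ) : ℝ :=
  (1/4) * (1 + (1 - θ^2)/(1 + ε*θ)^2 + ε^2*θ*(1 - θ^2)/(1 + ε*θ)^2 + θ)

def dlnBeta1 (θ ε : ℝ) : ℝ := (1/2) * (1 - (1 - θ^2)/(1 + ε*θ)^2)

def dlnBeta0 (θ ε : ℝ) : ℝ :=
  (1/4) * (1 + (1 - θ^2)/(1 + ε*θ)^2 - ε^2*θ*(1 - θ^2)/(1 + ε*θ)^2 - θ)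

/-- At `θ = 1` this is `3/2` because `2 / 0 = 0`; the ratio it bounds vanishes there. -/
def dlnBetaBound (θ : ℝ) : ℝ := 3/2 * (1 + (1 + θ)/(1 - θ))

end

theorem dlnBeta2_add_dlnBeta1_add_dlnBeta0 (θ ε : ℝ) :
    dlnBeta2 θ ε + dlnBeta1 θ ε + dlnBeta0 θ ε = 1 := by
  unfold dlnBeta2 dlnBeta1 dlnBeta0; ring

theorem sub_div_add_mem_Ioo {p q : ℝ} (hp : 0 < p) (hq : 0 < q) :
    (p - q) / (p + q) ∈ Ioo (-1) 1 := by
  rw [mem_Ioo, lt_div_iff₀ (by positivity), div_lt_one (by positivity)]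
  constructor <;> linarith

section Coefficients

variable {θ ε : ℝ}

theorem one_add_mul_pos (hθ : θ ∈ Icc 0 1) (hε : ε ∈ Ioo (-1) 1) : 0 < 1 + ε * θ := by
  nlinarith [hθ.1, hθ.2, hε.1, hε.2]

theorem one_sub_sq_div_one_add_mul_sq_nonneg (hθ : θ ∈ Icc 0 1) :
    0 ≤ (1 - θ^2)/(1 + ε*θ)^2 :=
  div_nonneg (by nlinarith [hθ.1, hθ.2]) (sq_nonneg _)

theorem one_sub_sq_div_one_add_mul_sq_le (hθ : θ ∈ Icc 0 1) (hε : ε ∈ Ioo (-1) 1) :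
    (1 - θ^2)/(1 + ε*θ)^2 ≤ (1 + θ)/(1 - θ) := by
  rcases hθ.2.eq_or_lt with rfl | hθ1
  · norm_num
  have := one_add_mul_pos hθ hε
  rw [div_le_div_iff₀ (by positivity) (by linarith)]
  have h1ε : 0 ≤ θ * (1 + ε) := mul_nonneg hθ.1 (by linarith [hε.1])
  nlinarith [mul_nonneg (mul_nonneg (by linarith [hθ.1] : 0 ≤ 1 + θ) h1ε)
    (by nlinarith [hθ.1] : 0 ≤ 2 - θ + ε*θ)]

theorem dlnBetaBound_pos (hθ : θ ∈ Icc 0 1) : 0 < dlnBetaBound θ := by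
  have : 0 ≤ (1 + θ)/(1 - θ) := div_nonneg (by linarith [hθ.1]) (by linarith [hθ.2])
  unfold dlnBetaBound; positivity

theorem abs_dlnBeta_sum_le (hθ : θ ∈ Icc 0 1) (hε : ε ∈ Ioo (-1) 1) :
    |dlnBeta2 θ ε| + |dlnBeta1 θ ε| + |dlnBeta0 θ ε| ≤ dlnBetaBound θ := by
  have hA := one_sub_sq_div_one_add_mul_sq_nonneg (ε := ε) hθ
  have hAle := one_sub_sq_div_one_add_mul_sq_le hθ hε
  have hE : ε^2*θ*(1 - θ^2)/(1 + ε*θ)^2 = ε^2*θ * ((1 - θ^2)/(1 + ε*θ)^2) := by ring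
  unfold dlnBeta2 dlnBeta1 dlnBeta0 dlnBetaBound
  rw [hE]
  generalize (1 - θ^2)/(1 + ε*θ)^2 = A at hA hAle
  have hεθ : 0 ≤ ε^2*θ ∧ ε^2*θ ≤ 1 :=
    ⟨by have := hθ.1; positivity, by nlinarith [hθ.1, hθ.2, hε.1, hε.2]⟩
  have hEA : 0 ≤ ε^2*θ*A ∧ ε^2*θ*A ≤ A := ⟨mul_nonneg hεθ.1 hA, by nlinarith⟩
  have h₂ : |1/4 * (1 + A + ε^2*θ*A + θ)| ≤ (1 + A)/2 :=
    abs_le.2 ⟨by linarith [hθ.1], by linarith [hθ.2]⟩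
  have h₁ : |1/2 * (1 - A)| ≤ (1 + A)/2 := abs_le.2 ⟨by linarith, by linarith⟩
  have h₀ : |1/4 * (1 + A - ε^2*θ*A - θ)| ≤ (1 + A)/2 :=
    abs_le.2 ⟨by linarith [hθ.2], by linarith [hθ.1]⟩
  linarith

/-- `t_{n,β} - t_n` is `(k_n + k_{n-1})/2` times this quantity. As `β₁` can be negative,
`t_{n,β} ∈ [t_{n-1}, t_{n+1}]` is not a convexity statement and is read off this closed form. -/
theorem dlnBeta_shift_eq (hθ : θ ∈ Icc 0 1) (hε : ε ∈ Ioo (-1) 1) :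
    dlnBeta2 θ ε * (1 + ε) - dlnBeta0 θ ε * (1 - ε)
      = (θ * (1 + ε^2) + 2*ε) / (2 * (1 + ε*θ)) := by
  have : 1 + θ * ε ≠ 0 := by linarith [one_add_mul_pos hθ hε]
  unfold dlnBeta2 dlnBeta0
  field_simp
  ring

theorem dlnBeta_shift_mem_Icc (hθ : θ ∈ Icc 0 1) (hε : ε ∈ Ioo (-1) 1) :
    dlnBeta2 θ ε * (1 + ε) - dlnBeta0 θ ε * (1 - ε) ∈ Icc (-(1 - ε)) (1 + ε) := by
  have := one_add_mul_pos hθ hε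
  obtain ⟨hθ0, hθ1⟩ := hθ
  obtain ⟨hε0, hε1⟩ := hε
  rw [dlnBeta_shift_eq ⟨hθ0, hθ1⟩ ⟨hε0, hε1⟩, mem_Icc, le_div_iff₀ (by positivity),
    div_le_iff₀ (by positivity)]
  constructor
  · nlinarith [mul_le_mul_of_nonneg_left (by nlinarith : (1 - ε)^2 ≤ 4) hθ0]
  · nlinarith [mul_nonneg hθ0 (sq_nonneg (1 + ε))]

theorem dln_node_mem_Icc (hθ : θ ∈ Icc 0 1) {t₀ t₁ t₂ : ℝ} (h₀₁ : t₀ < t₁) (h₁₂ : t₁ < t₂)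
    (hε : ε = ((t₂ - t₁) - (t₁ - t₀)) / ((t₂ - t₁) + (t₁ - t₀))) :
    dlnBeta2 θ ε * t₂ + dlnBeta1 θ ε * t₁ + dlnBeta0 θ ε * t₀ ∈ Icc t₀ t₂ := by
  have hεI : ε ∈ Ioo (-1) 1 := hε ▸ sub_div_add_mem_Ioo (sub_pos.2 h₁₂) (sub_pos.2 h₀₁)
  have hσ := dlnBeta_shift_mem_Icc hθ hεI
  have hεh : ε * (t₂ - t₀) = (t₂ - t₁) - (t₁ - t₀) := by
    rw [hε, show (t₂ - t₁) + (t₁ - t₀) = t₂ - t₀ by ring, div_mul_cancel₀ _ (by linarith)]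
  have hsum := dlnBeta2_add_dlnBeta1_add_dlnBeta0 θ ε
  have hnode : dlnBeta2 θ ε * t₂ + dlnBeta1 θ ε * t₁ + dlnBeta0 θ ε * t₀ - t₁
      = (t₂ - t₀) / 2 * (dlnBeta2 θ ε * (1 + ε) - dlnBeta0 θ ε * (1 - ε)) := by
    linear_combination t₁ * hsum - (dlnBeta2 θ ε + dlnBeta0 θ ε) / 2 * hεh
  have hh : 0 ≤ (t₂ - t₀) / 2 := by linarith
  constructor
  · nlinarith [mul_le_mul_of_nonneg_left hσ.1 hh]
  · nlinarith [mul_le_mul_of_nonneg_left hσ.2 hh]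

end Coefficients

/-- Consistency of the DLN β-average: there is `C(θ) > 0` with
`‖u_{n,β} − u(t_{n,β})‖² ≤ C(θ) (k_n + k_{n-1})³ ∫_{t_{n-1}}^{t_{n+1}} ‖u''‖²`. -/
theorem dln_beta_average_consistency
    (θ : ℝ) (hθ : θ ∈ Set.Icc (0:ℝ) 1) :
    ∃ C : ℝ, 0 < C ∧
      ∀ (Y : Type*) [NormedAddCommGroup Y] [NormedSpace ℝ Y] [CompleteSpace Y]
        (u : ℝ → Y), ContDiff ℝ 2 u →
        ∀ (t0 t1 t2 : ℝ), t0 < t1 → t1 < t2 →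
          let kn : ℝ := t2 - t1
          let kn1 : ℝ := t1 - t0
          let ε : ℝ := (kn - kn1) / (kn + kn1)
          let β2 : ℝ := (1/4) * (1 + (1 - θ^2)/(1 + ε*θ)^2 + ε^2*θ*(1 - θ^2)/(1 + ε*θ)^2 + θ)
          let β1 : ℝ := (1/2) * (1 - (1 - θ^2)/(1 + ε*θ)^2)
          let β0 : ℝ := (1/4) * (1 + (1 - θ^2)/(1 + ε*θ)^2 - ε^2*θ*(1 - θ^2)/(1 + ε*θ)^2 - θ)
          let tβ : ℝ := β2 * t2 + β1 * t1 + β0 * t0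
          let unβ : Y := β2 • u t2 + β1 • u t1 + β0 • u t0
          ‖unβ - u tβ‖^2
            ≤ C * (kn + kn1)^3 * ∫ t in t0..t2, ‖iteratedDeriv 2 u t‖^2 := by
  refine ⟨dlnBetaBound θ ^ 2, pow_pos (dlnBetaBound_pos hθ) 2, ?_⟩
  intro Y _ _ _ u hu t₀ t₁ t₂ h₀₁ h₁₂ kn kn1 ε β2 β1 β0 tβ unβ
  have hε : ε ∈ Ioo (-1) 1 := sub_div_add_mem_Ioo (sub_pos.2 h₁₂) (sub_pos.2 h₀₁)
  have hnode : tβ ∈ Icc t₀ t₂ := dln_node_mem_Icc hθ h₀₁ h₁₂ rfl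
  have hlen : kn + kn1 = t₂ - t₀ := by simp only [kn, kn1]; ring
  have hu₂ : Continuous fun t ↦ ‖iteratedDeriv 2 u t‖ :=
    (hu.continuous_iteratedDeriv 2 le_rfl).norm
  set M := ∫ t in t₀..t₂, ‖iteratedDeriv 2 u t‖
  have hM : 0 ≤ (t₂ - t₀) * M :=
    mul_nonneg (by linarith)
      (intervalIntegral.integral_nonneg (by linarith) fun _ _ ↦ norm_nonneg _)
  have herr : ‖unβ - u tβ‖ ≤ dlnBetaBound θ * ((t₂ - t₀) * M) :=
    (norm_affineCombination_sub_le hu ⟨le_rfl, by linarith⟩ ⟨h₀₁.le, h₁₂.le⟩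
      ⟨by linarith, le_rfl⟩ hnode (dlnBeta2_add_dlnBeta1_add_dlnBeta0 θ ε) rfl).trans
      (mul_le_mul_of_nonneg_right (abs_dlnBeta_sum_le hθ hε) hM)
  have hM₂ : M ^ 2 ≤ (t₂ - t₀) * ∫ t in t₀..t₂, ‖iteratedDeriv 2 u t‖ ^ 2 :=
    sq_intervalIntegral_le_mul_intervalIntegral_sq (by linarith) (hu₂.intervalIntegrable _ _)
      ((hu₂.pow 2).intervalIntegrable _ _)
  calc ‖unβ - u tβ‖ ^ 2 ≤ (dlnBetaBound θ * ((t₂ - t₀) * M)) ^ 2 := by gcongr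
    _ = dlnBetaBound θ ^ 2 * (t₂ - t₀) ^ 2 * M ^ 2 := by ring
    _ ≤ dlnBetaBound θ ^ 2 * (t₂ - t₀) ^ 2 *
          ((t₂ - t₀) * ∫ t in t₀..t₂, ‖iteratedDeriv 2 u t‖ ^ 2) := by gcongr
    _ = _ := by rw [hlen]; ring
end

section
/- Consistency of the second-order linear extrapolation: for every θ ∈ [0,1] there is a constant C(θ) > 0 such that for every real Banach space Y, every twice continuously differentiable map u : ℝ → Y, and all time nodes t_{n-1} < t_n < t_{n+1} with k_n = t_{n+1} − t_n, k_{n-1} = t_n − t_{n-1}, one has ‖ũ_n − u(t_{n,β})‖_Y² ≤ C(θ) (k_n + k_{n-1})³ ∫_{t_{n-1}}^{t_{n+1}} ‖u''(t)‖_Y² dt, where ũ_n = β_2^{(n)} [ (1 + k_n/k_{n-1}) u(t_n) − (k_n/k_{n-1}) u(t_{n-1}) ] + β_1^{(n)} u(t_n) + β_0^{(n)} u(t_{n-1}) and t_{n,β} = β_2^{(n)} t_{n+1} + β_1^{(n)} t_n + β_0^{(n)} t_{n-1}. -/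
/-!
Since `β₂ + β₁ + β₀ = 1`, the extrapolated value `ũ_n` is the value at `t_{n,β}` of the secant
of `u` through `t_{n-1}` and `t_n`. Moreover `t_{n,β}` is the midpoint of `[t_{n-1}, t_{n+1}]`
shifted by `c (t_{n+1} - t_{n-1}) / 2` with `c = θ (1 - ε²) / (2 (1 + εθ)) ∈ [0, 1]`, so it stays
in `[t_{n-1}, t_{n+1}]`. Expanding `u(t_n)` and `u(t_{n,β})` by Taylor's formula at `t_{n-1}`, the
secant error is a combination of two integral remainders, each of norm at most
`(t_{n+1} - t_{n-1}) ∫ ‖u''‖`; Cauchy–Schwarz then gives the bound with `C = 4`.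
-/

open Set MeasureTheory

theorem sq_intervalIntegral_le {f : ℝ → ℝ} (hf : Continuous f) {a b : ℝ} (hab : a ≤ b) :
    (∫ x in a..b, f x) ^ 2 ≤ (b - a) * ∫ x in a..b, f x ^ 2 := by
  have hquad : ∀ t : ℝ,
      0 ≤ (b - a) * (t * t) + (-2 * ∫ x in a..b, f x) * t + ∫ x in a..b, f x ^ 2 := by
    intro t
    have hexp : ∫ x in a..b, (t - f x) ^ 2
        = (b - a) * (t * t) + (-2 * ∫ x in a..b, f x) * t + ∫ x in a..b, f x ^ 2 := by
      have hf₁ := (hf.const_mul (-2 * t)).intervalIntegrable (μ := volume) a b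
      have hf₂ : IntervalIntegrable (fun x ↦ f x ^ 2) volume a b :=
        (hf.pow 2).intervalIntegrable _ _
      simp_rw [show ∀ x, (t - f x) ^ 2 = t * t + (-2 * t * f x + f x ^ 2) from fun x ↦ by ring]
      rw [intervalIntegral.integral_add intervalIntegrable_const (hf₁.add hf₂),
        intervalIntegral.integral_add hf₁ hf₂, intervalIntegral.integral_const,
        intervalIntegral.integral_const_mul, smul_eq_mul]
      ring
    exact hexp ▸ intervalIntegral.integral_nonneg hab fun x _ ↦ sq_nonneg _
  have hdisc := discrim_le_zero hquad
  rw [discrim] at hdisc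
  nlinarith

section Taylor

variable {Y : Type*} [NormedAddCommGroup Y] [NormedSpace ℝ Y]

theorem taylor_integral_remainder_two [CompleteSpace Y] {u : ℝ → Y} (hu : ContDiff ℝ 2 u)
    (c x : ℝ) :
    u x = u c + (x - c) • deriv u c + ∫ s in c..x, (x - s) • iteratedDeriv 2 u s := by
  have hu' : ∀ s, HasDerivAt u (deriv u s) s :=
    fun s ↦ (hu.differentiable (by norm_num) s).hasDerivAt
  have hu'' : ∀ s, HasDerivAt (deriv u) (iteratedDeriv 2 u s) s := by
    intro s
    rw [iteratedDeriv_succ, iteratedDeriv_one]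
    refine DifferentiableAt.hasDerivAt ?_
    simpa [iteratedDeriv_one] using hu.differentiable_iteratedDeriv 1 (by norm_num) s
  have hF : ∀ s ∈ uIcc c x,
      HasDerivAt (fun t ↦ u t + (x - t) • deriv u t) ((x - s) • iteratedDeriv 2 u s) s := by
    intro s _
    convert (hu' s).add (((hasDerivAt_id s).const_sub x).smul (hu'' s)) using 1
    · rfl
    · simp only [id_eq]; module
  have hint : IntervalIntegrable (fun s ↦ (x - s) • iteratedDeriv 2 u s) volume c x :=
    ((continuous_const.sub continuous_id).smul
      (hu.continuous_iteratedDeriv 2 le_rfl)).intervalIntegrable _ _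
  rw [intervalIntegral.integral_eq_sub_of_hasDerivAt hF hint]
  simp

theorem norm_integral_sub_smul_le {f : ℝ → Y} (hf : Continuous f) {c x : ℝ} (hcx : c ≤ x) :
    ‖∫ s in c..x, (x - s) • f s‖ ≤ (x - c) * ∫ s in c..x, ‖f s‖ := by
  rw [← intervalIntegral.integral_const_mul]
  refine intervalIntegral.norm_integral_le_of_norm_le hcx (ae_of_all _ fun s hs ↦ ?_)
    ((continuous_const.mul hf.norm).intervalIntegrable _ _)
  rw [norm_smul, Real.norm_of_nonneg (sub_nonneg.2 hs.2)]
  exact mul_le_mul_of_nonneg_right (by linarith [hs.1]) (norm_nonneg _)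

end Taylor

section Extrapolation

theorem extrapolation_eq_lineMap {V : Type*} [AddCommGroup V] [Module ℝ V] (v₀ v₁ : V)
    {β₂ β₁ β₀ t₀ t₁ t₂ : ℝ} (hβ : β₂ + β₁ + β₀ = 1) (h₀₁ : t₀ ≠ t₁) :
    β₂ • ((1 + (t₂ - t₁) / (t₁ - t₀)) • v₁ - ((t₂ - t₁) / (t₁ - t₀)) • v₀) + β₁ • v₁ + β₀ • v₀
      = AffineMap.lineMap v₀ v₁ ((β₂ * t₂ + β₁ * t₁ + β₀ * t₀ - t₀) / (t₁ - t₀)) := by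
  have h : t₁ - t₀ ≠ 0 := sub_ne_zero.2 h₀₁.symm
  have hc : β₂ * (1 + (t₂ - t₁) / (t₁ - t₀)) + β₁
      = (β₂ * t₂ + β₁ * t₁ + β₀ * t₀ - t₀) / (t₁ - t₀) := by
    field_simp; linear_combination (-t₀) * hβ
  rw [AffineMap.lineMap_apply_module, ← hc]
  linear_combination (norm := module) hβ • v₀

variable {Y : Type*} [NormedAddCommGroup Y] [NormedSpace ℝ Y] [CompleteSpace Y]
  {u : ℝ → Y} {t₀ t₁ s b : ℝ}

theorem norm_lineMap_sub_le (hu : ContDiff ℝ 2 u) (h₀₁ : t₀ < t₁) (h₁b : t₁ ≤ b)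
    (h₀s : t₀ ≤ s) (hsb : s ≤ b) :
    ‖AffineMap.lineMap (u t₀) (u t₁) ((s - t₀) / (t₁ - t₀)) - u s‖
      ≤ 2 * (b - t₀) * ∫ r in t₀..b, ‖iteratedDeriv 2 u r‖ := by
  set a := (s - t₀) / (t₁ - t₀)
  have ha : a * (t₁ - t₀) = s - t₀ := div_mul_cancel₀ _ (sub_ne_zero.2 h₀₁.ne')
  have ha₀ : 0 ≤ a := div_nonneg (sub_nonneg.2 h₀s) (sub_nonneg.2 h₀₁.le)
  have hu₂ : Continuous (iteratedDeriv 2 u) := hu.continuous_iteratedDeriv 2 le_rfl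
  set R : ℝ → Y := fun x ↦ ∫ r in t₀..x, (x - r) • iteratedDeriv 2 u r
  set N : ℝ → ℝ := fun x ↦ ∫ r in t₀..x, ‖iteratedDeriv 2 u r‖
  have hR : ∀ x, t₀ ≤ x → x ≤ b → ‖R x‖ ≤ (x - t₀) * N b := fun x h₀x hxb ↦
    (norm_integral_sub_smul_le hu₂ h₀x).trans <| mul_le_mul_of_nonneg_left
      (intervalIntegral.integral_mono_interval le_rfl h₀x hxb
        (ae_of_all _ fun _ ↦ norm_nonneg _) (hu₂.norm.intervalIntegrable _ _))
      (sub_nonneg.2 h₀x)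
  have hN : 0 ≤ N b :=
    intervalIntegral.integral_nonneg (h₀s.trans hsb) fun _ _ ↦ norm_nonneg _
  have herr : AffineMap.lineMap (u t₀) (u t₁) a - u s = a • R t₁ - R s := by
    rw [AffineMap.lineMap_apply_module', taylor_integral_remainder_two hu t₀ t₁,
      taylor_integral_remainder_two hu t₀ s, ← ha]
    module
  calc ‖AffineMap.lineMap (u t₀) (u t₁) a - u s‖
      ≤ a * ‖R t₁‖ + ‖R s‖ := by
        rw [herr, ← norm_smul_of_nonneg ha₀]
        exact norm_sub_le _ _
    _ ≤ a * ((t₁ - t₀) * N b) + (s - t₀) * N b := by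
        gcongr
        · exact hR t₁ h₀₁.le h₁b
        · exact hR s h₀s hsb
    _ ≤ 2 * (b - t₀) * N b := by
        rw [← mul_assoc, ha]; nlinarith

theorem sq_norm_lineMap_sub_le (hu : ContDiff ℝ 2 u) (h₀₁ : t₀ < t₁) (h₁b : t₁ ≤ b)
    (h₀s : t₀ ≤ s) (hsb : s ≤ b) :
    ‖AffineMap.lineMap (u t₀) (u t₁) ((s - t₀) / (t₁ - t₀)) - u s‖ ^ 2
      ≤ 4 * (b - t₀) ^ 3 * ∫ r in t₀..b, ‖iteratedDeriv 2 u r‖ ^ 2 := by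
  have hCS := sq_intervalIntegral_le (hu.continuous_iteratedDeriv 2 le_rfl).norm (h₀s.trans hsb)
  calc _ ≤ (2 * (b - t₀) * ∫ r in t₀..b, ‖iteratedDeriv 2 u r‖) ^ 2 :=
        pow_le_pow_left₀ (norm_nonneg _) (norm_lineMap_sub_le hu h₀₁ h₁b h₀s hsb) 2
    _ = 4 * (b - t₀) ^ 2 * (∫ r in t₀..b, ‖iteratedDeriv 2 u r‖) ^ 2 := by ring
    _ ≤ 4 * (b - t₀) ^ 2 * ((b - t₀) * ∫ r in t₀..b, ‖iteratedDeriv 2 u r‖ ^ 2) := by gcongr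
    _ = _ := by ring

end Extrapolation

namespace DLN

noncomputable def β₂ (θ ε : ℝ) : ℝ :=
  (1/4) * (1 + (1 - θ^2)/(1 + ε*θ)^2 + ε^2*θ*(1 - θ^2)/(1 + ε*θ)^2 + θ)

noncomputable def β₁ (θ ε : ℝ) : ℝ := (1/2) * (1 - (1 - θ^2)/(1 + ε*θ)^2)

noncomputable def β₀ (θ ε : ℝ) : ℝ :=
  (1/4) * (1 + (1 - θ^2)/(1 + ε*θ)^2 - ε^2*θ*(1 - θ^2)/(1 + ε*θ)^2 - θ)

theorem β₂_add_β₁_add_β₀ (θ ε : ℝ) : β₂ θ ε + β₁ θ ε + β₀ θ ε = 1 := by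
  unfold β₂ β₁ β₀; ring

theorem weightedNode_eq {θ ε t₀ t₁ t₂ : ℝ} (hε : 1 + θ * ε ≠ 0)
    (ht : (t₂ - t₀) * ε = (t₂ - t₁) - (t₁ - t₀)) :
    β₂ θ ε * t₂ + β₁ θ ε * t₁ + β₀ θ ε * t₀
      = (t₀ + t₂) / 2 + θ * (1 - ε^2) / (2 * (1 + ε * θ)) * ((t₂ - t₀) / 2) := by
  obtain rfl : t₁ = (t₀ + t₂) / 2 - ε * (t₂ - t₀) / 2 := by linear_combination ht / 2
  unfold β₂ β₁ β₀
  field_simp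
  ring

theorem weightedNode_offset_mem_Icc {θ ε : ℝ} (hθ : θ ∈ Icc 0 1) (hε : ε ∈ Ioo (-1) 1) :
    θ * (1 - ε^2) / (2 * (1 + ε * θ)) ∈ Icc 0 1 := by
  obtain ⟨hθ₀, hθ₁⟩ := hθ
  obtain ⟨hε₀, hε₁⟩ := hε
  have hd : 0 < 2 * (1 + ε * θ) := by nlinarith
  constructor
  · exact div_nonneg (mul_nonneg hθ₀ (by nlinarith)) hd.le
  · rw [div_le_one hd]
    nlinarith [mul_nonneg hθ₀ (sq_nonneg (1 + ε))]

theorem weightedNode_mem_Icc {θ ε t₀ t₁ t₂ : ℝ} (hθ : θ ∈ Icc 0 1) (h₀₁ : t₀ < t₁)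
    (h₁₂ : t₁ < t₂) (hε : ε = ((t₂ - t₁) - (t₁ - t₀)) / ((t₂ - t₁) + (t₁ - t₀))) :
    β₂ θ ε * t₂ + β₁ θ ε * t₁ + β₀ θ ε * t₀ ∈ Icc t₀ t₂ := by
  have hK : 0 < (t₂ - t₁) + (t₁ - t₀) := by linarith
  have hε_mem : ε ∈ Ioo (-1) 1 := by
    rw [hε, mem_Ioo, lt_div_iff₀ hK, div_lt_one hK]
    constructor <;> linarith
  have ht : (t₂ - t₀) * ε = (t₂ - t₁) - (t₁ - t₀) := by
    rw [hε]; field_simp; ring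
  have hd : 1 + θ * ε ≠ 0 := by nlinarith [hε_mem.1, hε_mem.2, hθ.1, hθ.2]
  obtain ⟨hc₀, hc₁⟩ := weightedNode_offset_mem_Icc hθ hε_mem
  rw [weightedNode_eq hd ht]
  constructor <;> nlinarith

end DLN

/-- Consistency of the second-order linear extrapolation `ũ_n` for `u(t_{n,β})`:
there is `C(θ) > 0` with
`‖ũ_n − u(t_{n,β})‖² ≤ C(θ) (k_n + k_{n-1})³ ∫_{t_{n-1}}^{t_{n+1}} ‖u''‖²`. -/
theorem dln_extrapolation_consistency
    (θ : ℝ) (hθ : θ ∈ Set.Icc (0:ℝ) 1) :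
    ∃ C : ℝ, 0 < C ∧
      ∀ (Y : Type*) [NormedAddCommGroup Y] [NormedSpace ℝ Y] [CompleteSpace Y]
        (u : ℝ → Y), ContDiff ℝ 2 u →
        ∀ (t0 t1 t2 : ℝ), t0 < t1 → t1 < t2 →
          let kn : ℝ := t2 - t1
          let kn1 : ℝ := t1 - t0
          let ε : ℝ := (kn - kn1) / (kn + kn1)
          let β2 : ℝ := (1/4) * (1 + (1 - θ^2)/(1 + ε*θ)^2 + ε^2*θ*(1 - θ^2)/(1 + ε*θ)^2 + θ)
          let β1 : ℝ := (1/2) * (1 - (1 - θ^2)/(1 + ε*θ)^2)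
          let β0 : ℝ := (1/4) * (1 + (1 - θ^2)/(1 + ε*θ)^2 - ε^2*θ*(1 - θ^2)/(1 + ε*θ)^2 - θ)
          let tβ : ℝ := β2 * t2 + β1 * t1 + β0 * t0
          let utilde : Y := β2 • ((1 + kn/kn1) • u t1 - (kn/kn1) • u t0)
              + β1 • u t1 + β0 • u t0
          ‖utilde - u tβ‖^2
            ≤ C * (kn + kn1)^3 * ∫ t in t0..t2, ‖iteratedDeriv 2 u t‖^2 := by
  refine ⟨4, four_pos, fun Y _ _ _ u hu t0 t1 t2 h01 h12 ↦ ?_⟩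
  intro kn kn1 ε β2 β1 β0 tβ utilde
  have htβ : tβ ∈ Icc t0 t2 := DLN.weightedNode_mem_Icc hθ h01 h12 rfl
  have hutilde : utilde = AffineMap.lineMap (u t0) (u t1) ((tβ - t0) / (t1 - t0)) :=
    extrapolation_eq_lineMap (u t0) (u t1) (DLN.β₂_add_β₁_add_β₀ θ ε) h01.ne
  rw [hutilde, sub_add_sub_cancel]
  exact sq_norm_lineMap_sub_le hu h01 h12.le htβ.1 htβ.2
end

section
/- Consistency of the DLN divided difference: for every θ ∈ [0,1] and all constants 0 < C_L ≤ C_U there is a constant C (depending only on θ, C_L, C_U) such that for every real Banach space Y, every three-times continuously differentiable map u : ℝ → Y, and all time nodes t_{n-1} < t_n < t_{n+1} whose steps k_n = t_{n+1} − t_n, k_{n-1} = t_n − t_{n-1} satisfy C_L ≤ k_n/k_{n-1} ≤ C_U, one has ‖ (1/k̂_n)(α_2 u(t_{n+1}) + α_1 u(t_n) + α_0 u(t_{n-1})) − u'(t_{n,β}) ‖_Y² ≤ C (k_n + k_{n-1})³ ∫_{t_{n-1}}^{t_{n+1}} ‖u'''(t)‖_Y² dt, where t_{n,β} = β_2^{(n)}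 t_{n+1} + β_1^{(n)} t_n + β_0^{(n)} t_{n-1}. -/
/-!
The DLN weights satisfy `α₂ + α₁ + α₀ = 0` and `Σ αᵢ (tᵢ - τ) = k̂` for every `τ`, and the
β-weights are chosen exactly so that `Σ αᵢ (tᵢ - t_{n,β})² = 0`: the divided difference
differentiates quadratics exactly at `t_{n,β}`. Expanding `u` around `t_{n,β}` with the integral
form of Taylor's remainder, the consistency error is therefore `(1/k̂) Σ αᵢ Rᵢ`. The same moment
identities place `t_{n,β}` in `[t_{n-1}, t_{n+1}]`, so `‖Rᵢ‖ ≤ (k_n + k_{n-1})²/2 · ∫ ‖u'''‖`;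
Cauchy–Schwarz turns this `L¹` bound into the `L²` one, and
`k̂ ≥ k_n/2 ≥ C_L (k_n + k_{n-1}) / (2 (C_L + 1))` controls the factor `1/k̂`.
-/

open intervalIntegral MeasureTheory Set
open scoped Interval

theorem norm_integral_smul_le_of_abs_le {Y : Type*} [NormedAddCommGroup Y] [NormedSpace ℝ Y]
    {φ : ℝ → ℝ} {g : ℝ → Y} (hφ : Continuous φ) (hg : Continuous g) {a b c d M : ℝ}
    (ha : a ∈ Icc c d) (hb : b ∈ Icc c d) (hM : ∀ s ∈ Icc c d, |φ s| ≤ M) :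
    ‖∫ s in a..b, φ s • g s‖ ≤ M * ∫ s in c..d, ‖g s‖ := by
  have hsub : Ι a b ⊆ Icc c d := uIoc_subset_uIcc.trans (uIcc_subset_Icc ha hb)
  have hM0 : 0 ≤ M := (abs_nonneg _).trans (hM a ha)
  have hint : IntegrableOn (fun s => M * ‖g s‖) (Icc c d) :=
    (continuous_const.mul hg.norm).integrableOn_Icc
  calc ‖∫ s in a..b, φ s • g s‖ ≤ ∫ s in Ι a b, ‖φ s • g s‖ :=
        norm_integral_le_integral_norm_uIoc
    _ ≤ ∫ s in Ι a b, M * ‖g s‖ := by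
      refine setIntegral_mono_on ((hφ.smul hg).norm.integrableOn_Icc.mono_set hsub)
        (hint.mono_set hsub) measurableSet_uIoc fun s hs => ?_
      rw [norm_smul, Real.norm_eq_abs]
      exact mul_le_mul_of_nonneg_right (hM s (hsub hs)) (norm_nonneg _)
    _ ≤ ∫ s in Icc c d, M * ‖g s‖ :=
      setIntegral_mono_set hint (ae_of_all _ fun s => by positivity) hsub.eventuallyLE
    _ = M * ∫ s in c..d, ‖g s‖ := by
      rw [integral_of_le (ha.1.trans ha.2), integral_Icc_eq_integral_Ioc,
        MeasureTheory.integral_const_mul]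

theorem sq_intervalIntegral_le_mul_integral_sq {g : ℝ → ℝ} (hg : Continuous g) {a b : ℝ}
    (hab : a ≤ b) :
    (∫ t in a..b, g t) ^ 2 ≤ (b - a) * ∫ t in a..b, g t ^ 2 := by
  rcases hab.eq_or_lt with rfl | hlt
  · simp
  set J := ∫ t in a..b, g t
  have hexpand : ∫ t in a..b, ((b - a) * g t - J) ^ 2
      = (b - a) * ((b - a) * (∫ t in a..b, g t ^ 2) - J ^ 2) := by
    have hpt : ∀ t, ((b - a) * g t - J) ^ 2
        = (b - a) ^ 2 * g t ^ 2 - (2 * (b - a) * J) * g t + J ^ 2 := fun t => by ring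
    simp_rw [hpt]
    rw [intervalIntegral.integral_add, intervalIntegral.integral_sub,
      intervalIntegral.integral_const_mul, intervalIntegral.integral_const_mul,
      intervalIntegral.integral_const, smul_eq_mul]
    · ring
    all_goals exact Continuous.intervalIntegrable (by fun_prop) a b
  have hnonneg : 0 ≤ ∫ t in a..b, ((b - a) * g t - J) ^ 2 :=
    integral_nonneg hab fun t _ => sq_nonneg _
  rw [hexpand] at hnonneg
  exact sub_nonneg.mp ((mul_nonneg_iff_of_pos_left (sub_pos.mpr hlt)).mp hnonneg)

section Taylor

variable {Y : Type*} [NormedAddCommGroup Y] [NormedSpace ℝ Y] {u : ℝ → Y}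

noncomputable def secondTaylorRemainder (u : ℝ → Y) (a b : ℝ) : Y :=
  ∫ s in a..b, ((b - s) ^ 2 / 2) • iteratedDeriv 3 u s

theorem eq_taylor_add_secondTaylorRemainder [CompleteSpace Y] (hu : ContDiff ℝ 3 u) (a b : ℝ) :
    u b = u a + (b - a) • deriv u a + ((b - a) ^ 2 / 2) • iteratedDeriv 2 u a
      + secondTaylorRemainder u a b := by
  rcases eq_or_ne a b with rfl | hab
  · simp [secondTaylorRemainder]
  have hwithin : ∀ k ≤ 3, ∀ x ∈ [[a, b]],
      iteratedDerivWithin k u [[a, b]] x = iteratedDeriv k u x :=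
    fun k hk x hx => iteratedDerivWithin_eq_iteratedDeriv (uniqueDiffOn_uIcc hab)
      (hu.of_le (by exact_mod_cast hk)).contDiffAt hx
  have h := taylor_integral_remainder (x₀ := a) (x := b) (n := 2) hu.contDiffOn
  rw [integral_congr fun x hx => by rw [hwithin 3 le_rfl x hx] ] at h
  simp only [taylorWithinEval_succ, taylor_within_zero_eval, iteratedDeriv_one,
    hwithin 1 (by norm_num) a left_mem_uIcc, hwithin 2 (by norm_num) a left_mem_uIcc] at h
  norm_num [Nat.factorial] at h
  rw [secondTaylorRemainder, ← h]
  module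

theorem norm_secondTaylorRemainder_le (hu : ContDiff ℝ 3 u) {a b c d : ℝ}
    (ha : a ∈ Icc c d) (hb : b ∈ Icc c d) :
    ‖secondTaylorRemainder u a b‖ ≤ (d - c) ^ 2 / 2 * ∫ s in c..d, ‖iteratedDeriv 3 u s‖ := by
  refine norm_integral_smul_le_of_abs_le (by fun_prop) (hu.continuous_iteratedDeriv 3 le_rfl)
    ha hb fun s hs => ?_
  rw [abs_of_nonneg (by positivity)]
  gcongr ?_ / _
  exact sq_le_sq' (by linarith [hb.1, hs.2]) (by linarith [hb.2, hs.1])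

end Taylor

section ThreePoint

variable {a₀ a₁ a₂ t₀ t₁ t₂ τ K : ℝ}

theorem mem_Icc_of_three_point_moments (h01 : t₀ ≤ t₁) (h12 : t₁ ≤ t₂) (ha₁ : a₁ ≤ 0)
    (ha₀ : a₀ ≤ 0) (hK : 0 < K) (h0 : a₂ + a₁ + a₀ = 0)
    (h1 : a₂ * (t₂ - τ) + a₁ * (t₁ - τ) + a₀ * (t₀ - τ) = K)
    (h2 : a₂ * (t₂ - τ) ^ 2 + a₁ * (t₁ - τ) ^ 2 + a₀ * (t₀ - τ) ^ 2 = 0) :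
    τ ∈ Icc t₀ t₂ := by
  have hshift : ∀ c, a₂ * (t₂ - c) ^ 2 + a₁ * (t₁ - c) ^ 2 + a₀ * (t₀ - c) ^ 2 = 2 * K * (τ - c) :=
    fun c => by linear_combination h2 + 2 * (τ - c) * h1 + (τ - c) ^ 2 * h0
  constructor
  · have := hshift t₀
    nlinarith [mul_nonneg (neg_nonneg.mpr ha₀) (sq_nonneg (t₁ - t₀)), mul_le_mul_of_nonneg_left
      (pow_le_pow_left₀ (sub_nonneg.mpr h01) (sub_le_sub_right h12 t₀) 2) (by linarith : 0 ≤ a₂)]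
  · have := hshift t₂
    nlinarith [mul_nonneg (neg_nonneg.mpr ha₁) (sq_nonneg (t₁ - t₂)),
      mul_nonneg (neg_nonneg.mpr ha₀) (sq_nonneg (t₀ - t₂))]

variable {Y : Type*} [NormedAddCommGroup Y] [NormedSpace ℝ Y] [CompleteSpace Y] {u : ℝ → Y}

theorem three_point_sub_deriv_eq_remainders (hu : ContDiff ℝ 3 u) (hK : K ≠ 0)
    (h0 : a₂ + a₁ + a₀ = 0) (h1 : a₂ * (t₂ - τ) + a₁ * (t₁ - τ) + a₀ * (t₀ - τ) = K)
    (h2 : a₂ * (t₂ - τ) ^ 2 + a₁ * (t₁ - τ) ^ 2 + a₀ * (t₀ - τ) ^ 2 = 0) :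
    (1 / K) • (a₂ • u t₂ + a₁ • u t₁ + a₀ • u t₀) - deriv u τ
      = (1 / K) • (a₂ • secondTaylorRemainder u τ t₂ + a₁ • secondTaylorRemainder u τ t₁
          + a₀ • secondTaylorRemainder u τ t₀) := by
  have hsum : a₂ • u t₂ + a₁ • u t₁ + a₀ • u t₀ = K • deriv u τ
      + (a₂ • secondTaylorRemainder u τ t₂ + a₁ • secondTaylorRemainder u τ t₁
          + a₀ • secondTaylorRemainder u τ t₀) := by
    rw [eq_taylor_add_secondTaylorRemainder hu τ t₂, eq_taylor_add_secondTaylorRemainder hu τ t₁,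
      eq_taylor_add_secondTaylorRemainder hu τ t₀]
    match_scalars
    · linear_combination h0
    · linear_combination h1
    · linear_combination h2 / 2
    all_goals ring
  rw [hsum, smul_add, smul_smul, one_div, inv_mul_cancel₀ hK, one_smul, add_sub_cancel_left]

theorem norm_three_point_sub_deriv_le (hu : ContDiff ℝ 3 u) (h01 : t₀ ≤ t₁) (h12 : t₁ ≤ t₂)
    (hτ : τ ∈ Icc t₀ t₂) (hK : 0 < K) (h0 : a₂ + a₁ + a₀ = 0)
    (h1 : a₂ * (t₂ - τ) + a₁ * (t₁ - τ) + a₀ * (t₀ - τ) = K)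
    (h2 : a₂ * (t₂ - τ) ^ 2 + a₁ * (t₁ - τ) ^ 2 + a₀ * (t₀ - τ) ^ 2 = 0) :
    ‖(1 / K) • (a₂ • u t₂ + a₁ • u t₁ + a₀ • u t₀) - deriv u τ‖
      ≤ (|a₂| + |a₁| + |a₀|) / (2 * K) * (t₂ - t₀) ^ 2
        * ∫ t in t₀..t₂, ‖iteratedDeriv 3 u t‖ := by
  have h02 : t₀ ≤ t₂ := h01.trans h12
  set M := (t₂ - t₀) ^ 2 / 2 * ∫ t in t₀..t₂, ‖iteratedDeriv 3 u t‖
  have hR : ∀ b ∈ Icc t₀ t₂, ‖secondTaylorRemainder u τ b‖ ≤ M :=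
    fun b hb => norm_secondTaylorRemainder_le hu hτ hb
  have hsum : ‖a₂ • secondTaylorRemainder u τ t₂ + a₁ • secondTaylorRemainder u τ t₁
      + a₀ • secondTaylorRemainder u τ t₀‖ ≤ (|a₂| + |a₁| + |a₀|) * M := by
    refine norm_add₃_le.trans ?_
    simp only [norm_smul, Real.norm_eq_abs, add_mul]
    gcongr
    exacts [hR t₂ ⟨h02, le_rfl⟩, hR t₁ ⟨h01, h12⟩, hR t₀ ⟨le_rfl, h02⟩]
  rw [three_point_sub_deriv_eq_remainders hu hK.ne' h0 h1 h2, norm_smul,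
    Real.norm_of_nonneg (by positivity)]
  calc 1 / K * ‖_‖ ≤ 1 / K * ((|a₂| + |a₁| + |a₀|) * M) := by gcongr
    _ = _ := by simp only [M]; field_simp

theorem norm_three_point_sub_deriv_sq_le (hu : ContDiff ℝ 3 u) (h01 : t₀ ≤ t₁) (h12 : t₁ ≤ t₂)
    (hτ : τ ∈ Icc t₀ t₂) (hK : 0 < K) (h0 : a₂ + a₁ + a₀ = 0)
    (h1 : a₂ * (t₂ - τ) + a₁ * (t₁ - τ) + a₀ * (t₀ - τ) = K)
    (h2 : a₂ * (t₂ - τ) ^ 2 + a₁ * (t₁ - τ) ^ 2 + a₀ * (t₀ - τ) ^ 2 = 0) :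
    ‖(1 / K) • (a₂ • u t₂ + a₁ • u t₁ + a₀ • u t₀) - deriv u τ‖ ^ 2
      ≤ ((|a₂| + |a₁| + |a₀|) / (2 * K)) ^ 2 * (t₂ - t₀) ^ 5
        * ∫ t in t₀..t₂, ‖iteratedDeriv 3 u t‖ ^ 2 := by
  set A := (|a₂| + |a₁| + |a₀|) / (2 * K)
  set J := ∫ t in t₀..t₂, ‖iteratedDeriv 3 u t‖
  have hJ : J ^ 2 ≤ (t₂ - t₀) * ∫ t in t₀..t₂, ‖iteratedDeriv 3 u t‖ ^ 2 :=
    sq_intervalIntegral_le_mul_integral_sq (hu.continuous_iteratedDeriv 3 le_rfl).norm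
      (h01.trans h12)
  calc _ ≤ (A * (t₂ - t₀) ^ 2 * J) ^ 2 := by
        gcongr
        exact norm_three_point_sub_deriv_le hu h01 h12 hτ hK h0 h1 h2
    _ = A ^ 2 * (t₂ - t₀) ^ 4 * J ^ 2 := by ring
    _ ≤ A ^ 2 * (t₂ - t₀) ^ 4 * ((t₂ - t₀) * ∫ t in t₀..t₂, ‖iteratedDeriv 3 u t‖ ^ 2) := by
        gcongr
    _ = _ := by ring

end ThreePoint

-- the point `t_{n,β}`
noncomputable def dlnNode (θ t₀ t₁ t₂ : ℝ) : ℝ :=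
  let kn : ℝ := t₂ - t₁
  let kn1 : ℝ := t₁ - t₀
  let ε : ℝ := (kn - kn1) / (kn + kn1)
  let β2 : ℝ := (1/4) * (1 + (1 - θ^2)/(1 + ε*θ)^2 + ε^2*θ*(1 - θ^2)/(1 + ε*θ)^2 + θ)
  let β1 : ℝ := (1/2) * (1 - (1 - θ^2)/(1 + ε*θ)^2)
  let β0 : ℝ := (1/4) * (1 + (1 - θ^2)/(1 + ε*θ)^2 - ε^2*θ*(1 - θ^2)/(1 + ε*θ)^2 - θ)
  β2 * t₂ + β1 * t₁ + β0 * t₀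

theorem dln_second_moment_eq_zero {θ t₀ t₁ t₂ : ℝ} (h02 : t₀ ≠ t₂)
    (hkhat : (θ + 1) / 2 * (t₂ - t₁) - (θ - 1) / 2 * (t₁ - t₀) ≠ 0) :
    (θ + 1) / 2 * (t₂ - dlnNode θ t₀ t₁ t₂) ^ 2 + -θ * (t₁ - dlnNode θ t₀ t₁ t₂) ^ 2
      + (θ - 1) / 2 * (t₀ - dlnNode θ t₀ t₁ t₂) ^ 2 = 0 := by
  obtain ⟨k₁, rfl⟩ : ∃ k, t₂ = t₁ + k := ⟨t₂ - t₁, by ring⟩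
  obtain ⟨k₀, rfl⟩ : ∃ k, t₀ = t₁ - k := ⟨t₁ - t₀, by ring⟩
  simp only [dlnNode, add_sub_cancel_left, sub_sub_cancel] at hkhat ⊢
  have hk : k₁ + k₀ ≠ 0 := by contrapose! h02; linear_combination -h02
  have hD : (θ + 1) * k₁ + (1 - θ) * k₀ ≠ 0 := by contrapose! hkhat; linear_combination hkhat / 2
  -- `1 + εθ = 2 k̂ / (k_n + k_{n-1})`, so `hkhat` is what keeps the β-weights finite
  have hε : 1 + (k₁ - k₀) / (k₁ + k₀) * θ = ((θ + 1) * k₁ + (1 - θ) * k₀) / (k₁ + k₀) := by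
    field_simp
    ring
  rw [hε]
  field_simp
  ring

theorem dln_weights_div_avg_step_le {θ CL k₀ k₁ : ℝ} (hθ : θ ∈ Icc 0 1) (hCL : 0 < CL)
    (hk₀ : 0 < k₀) (hratio : CL ≤ k₁ / k₀) :
    (|(θ + 1) / 2| + |-θ| + |(θ - 1) / 2|) / (2 * ((θ + 1) / 2 * k₁ - (θ - 1) / 2 * k₀))
      * (k₁ + k₀) ≤ 2 * (CL + 1) / CL := by
  obtain ⟨hθ0, hθ1⟩ := hθ
  have hk₁ : CL * k₀ ≤ k₁ := (le_div_iff₀ hk₀).mp hratio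
  have hk₁_pos : 0 < k₁ := (mul_pos hCL hk₀).trans_le hk₁
  have hkhat : k₁ / 2 ≤ (θ + 1) / 2 * k₁ - (θ - 1) / 2 * k₀ := by
    nlinarith [mul_nonneg hθ0 hk₁_pos.le, mul_nonneg (sub_nonneg.mpr hθ1) hk₀.le]
  rw [abs_of_nonneg (by linarith), abs_neg, abs_of_nonneg hθ0, abs_of_nonpos (by linarith),
    div_mul_eq_mul_div, div_le_div_iff₀ (by linarith) hCL]
  nlinarith [mul_le_mul_of_nonneg_right (by linarith : 1 + θ ≤ 2)
    (by positivity : 0 ≤ CL * (k₁ + k₀)),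
    mul_le_mul_of_nonneg_left hkhat (by linarith : 0 ≤ CL + 1)]

theorem dln_divided_difference_consistency_general
    (θ : ℝ) (hθ : θ ∈ Set.Icc (0:ℝ) 1)
    (CL CU : ℝ) (hCL : 0 < CL) :
    ∃ C : ℝ, 0 < C ∧
      ∀ (Y : Type*) [NormedAddCommGroup Y] [NormedSpace ℝ Y] [CompleteSpace Y]
        (u : ℝ → Y), ContDiff ℝ 3 u →
        ∀ (t0 t1 t2 : ℝ), t0 < t1 → t1 < t2 →
          let kn : ℝ := t2 - t1
          let kn1 : ℝ := t1 - t0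
          CL ≤ kn / kn1 → kn / kn1 ≤ CU →
          let ε : ℝ := (kn - kn1) / (kn + kn1)
          let α2 : ℝ := (θ + 1) / 2
          let α1 : ℝ := -θ
          let α0 : ℝ := (θ - 1) / 2
          let β2 : ℝ := (1/4) * (1 + (1 - θ^2)/(1 + ε*θ)^2 + ε^2*θ*(1 - θ^2)/(1 + ε*θ)^2 + θ)
          let β1 : ℝ := (1/2) * (1 - (1 - θ^2)/(1 + ε*θ)^2)
          let β0 : ℝ := (1/4) * (1 + (1 - θ^2)/(1 + ε*θ)^2 - ε^2*θ*(1 - θ^2)/(1 + ε*θ)^2 - θ)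
          let khat : ℝ := α2 * kn - α0 * kn1
          let tβ : ℝ := β2 * t2 + β1 * t1 + β0 * t0
          ‖(1/khat) • (α2 • u t2 + α1 • u t1 + α0 • u t0) - deriv u tβ‖^2
            ≤ C * (kn + kn1)^3 * ∫ t in t0..t2, ‖iteratedDeriv 3 u t‖^2 := by
  refine ⟨4 * (CL + 1) ^ 2 / CL ^ 2, by positivity, ?_⟩
  intro Y _ _ _ u hu t0 t1 t2 h01 h12 kn kn1 hCLk _ ε α2 α1 α0 β2 β1 β0 khat tβ
  have hkhat : 0 < khat := by simp only [khat, kn, kn1, α2, α0]; nlinarith [hθ.1, hθ.2]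
  have hstep : kn + kn1 = t2 - t0 := by simp only [kn, kn1]; ring
  have h0 : α2 + α1 + α0 = 0 := by simp only [α2, α1, α0]; ring
  have h1 : α2 * (t2 - tβ) + α1 * (t1 - tβ) + α0 * (t0 - tβ) = khat := by
    simp only [khat, kn, kn1, α2, α1, α0]; ring
  have h2 : α2 * (t2 - tβ) ^ 2 + α1 * (t1 - tβ) ^ 2 + α0 * (t0 - tβ) ^ 2 = 0 :=
    dln_second_moment_eq_zero (by linarith) hkhat.ne'
  have hτ : tβ ∈ Icc t0 t2 := mem_Icc_of_three_point_moments h01.le h12.le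
    (by simp only [α1]; linarith [hθ.1]) (by simp only [α0]; linarith [hθ.2]) hkhat h0 h1 h2
  have hfactor : (|α2| + |α1| + |α0|) / (2 * khat) * (kn + kn1) ≤ 2 * (CL + 1) / CL :=
    dln_weights_div_avg_step_le hθ hCL (sub_pos.mpr h01) hCLk
  clear_value tβ khat α0 α1 α2 kn kn1
  have hI : 0 ≤ ∫ t in t0..t2, ‖iteratedDeriv 3 u t‖ ^ 2 :=
    integral_nonneg (by linarith) fun t _ => by positivity
  calc _ ≤ ((|α2| + |α1| + |α0|) / (2 * khat)) ^ 2 * (t2 - t0) ^ 5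
          * ∫ t in t0..t2, ‖iteratedDeriv 3 u t‖ ^ 2 :=
        norm_three_point_sub_deriv_sq_le hu h01.le h12.le hτ hkhat h0 h1 h2
    _ = ((|α2| + |α1| + |α0|) / (2 * khat) * (kn + kn1)) ^ 2 * (kn + kn1) ^ 3
          * ∫ t in t0..t2, ‖iteratedDeriv 3 u t‖ ^ 2 := by rw [hstep]; ring
    _ ≤ (2 * (CL + 1) / CL) ^ 2 * (kn + kn1) ^ 3 * ∫ t in t0..t2, ‖iteratedDeriv 3 u t‖ ^ 2 := by
      have hk : 0 ≤ (kn + kn1) ^ 3 := pow_nonneg (by linarith) 3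
      gcongr ?_ * _ * _
      exact pow_le_pow_left₀ (mul_nonneg (by positivity) (by linarith)) hfactor 2
    _ = _ := by ring

/-- Consistency of the DLN divided difference: for bounded step ratios
`C_L ≤ k_n/k_{n-1} ≤ C_U` there is `C = C(θ, C_L, C_U) > 0` with
`‖(1/k̂_n)(α₂ u(t_{n+1}) + α₁ u(t_n) + α₀ u(t_{n-1})) − u'(t_{n,β})‖²
  ≤ C (k_n + k_{n-1})³ ∫_{t_{n-1}}^{t_{n+1}} ‖u'''‖²`. -/
theorem dln_divided_difference_consistency
    (θ : ℝ) (hθ : θ ∈ Set.Icc (0:ℝ) 1)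
    (CL CU : ℝ) (hCL : 0 < CL) (hCLU : CL ≤ CU) :
    ∃ C : ℝ, 0 < C ∧
      ∀ (Y : Type*) [NormedAddCommGroup Y] [NormedSpace ℝ Y] [CompleteSpace Y]
        (u : ℝ → Y), ContDiff ℝ 3 u →
        ∀ (t0 t1 t2 : ℝ), t0 < t1 → t1 < t2 →
          let kn : ℝ := t2 - t1
          let kn1 : ℝ := t1 - t0
          CL ≤ kn / kn1 → kn / kn1 ≤ CU →
          let ε : ℝ := (kn - kn1) / (kn + kn1)
          let α2 : ℝ := (θ + 1) / 2
          let α1 : ℝ := -θ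
          let α0 : ℝ := (θ - 1) / 2
          let β2 : ℝ := (1/4) * (1 + (1 - θ^2)/(1 + ε*θ)^2 + ε^2*θ*(1 - θ^2)/(1 + ε*θ)^2 + θ)
          let β1 : ℝ := (1/2) * (1 - (1 - θ^2)/(1 + ε*θ)^2)
          let β0 : ℝ := (1/4) * (1 + (1 - θ^2)/(1 + ε*θ)^2 - ε^2*θ*(1 - θ^2)/(1 + ε*θ)^2 - θ)
          let khat : ℝ := α2 * kn - α0 * kn1
          let tβ : ℝ := β2 * t2 + β1 * t1 + β0 * t0
          ‖(1/khat) • (α2 • u t2 + α1 • u t1 + α0 • u t0) - deriv u tβ‖^2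
            ≤ C * (kn + kn1)^3 * ∫ t in t0..t2, ‖iteratedDeriv 3 u t‖^2 :=
  dln_divided_difference_consistency_general θ hθ CL CU hCL
end
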